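/- arXiv:1809.03694 — 2 statements merged into one kernel-verified Lean document; each statement's English description precedes it below -/
import Mathlib

section
/- Let G be a locally compact group. An element a ∈ G is aperiodic (the closed subgroup generated by a is not compact) if and only if for every compact set K ⊆ G there exists M ∈ ℕ such that K ∩ K a^n = ∅ and K ∩ K a^{−n} = ∅ for all n > M. -/
open Pointwise

/-- **Weil's lemma**: in a locally compact Hausdorff group, if infinitely many positive
powers of `a` return to a fixed compact set `L`, then the closure of the cyclic subgroup
generated by `a` is compact. -/
lemma weil_compact_closure {G : Type*} [Group G] [TopologicalSpace G]
    [IsTopologicalGroup G] [T2Space G] [LocallyCompactSpace G] (a : G) (L : Set G)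
    (hL : IsCompact L) (hrec : ∀ M : ℕ, ∃ n : ℕ, M < n ∧ a ^ n ∈ L) :
    IsCompact (closure ((Subgroup.zpowers a : Subgroup G) : Set G)) := by
  classical
  have hpowH : ∀ m : ℤ, a ^ m ∈ closure ((Subgroup.zpowers a : Subgroup G) : Set G) :=
    fun m => subset_closure ⟨m, rfl⟩
  -- a symmetric relatively compact open neighborhood of 1
  obtain ⟨K₀, hK₀c, hK₀n⟩ := exists_compact_mem_nhds (1 : G)
  set U : Set G := interior K₀ ∩ (interior K₀)⁻¹ with hUdef
  have hUopen : IsOpen U := isOpen_interior.inter isOpen_interior.inv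
  have h1i : (1 : G) ∈ interior K₀ := mem_interior_iff_mem_nhds.mpr hK₀n
  have hU1 : (1 : G) ∈ U := ⟨h1i, by simpa using h1i⟩
  have hUsymm : ∀ g ∈ U, g⁻¹ ∈ U := by
    rintro g ⟨hg1, hg2⟩
    exact ⟨Set.mem_inv.mp hg2, by simpa using hg1⟩
  have hclU : closure U ⊆ K₀ :=
    (closure_mono Set.inter_subset_left).trans (closure_minimal interior_subset hK₀c.isClosed)
  have hUclc : IsCompact (closure U) := hK₀c.of_isClosed_subset isClosed_closure hclU
  -- the compact set (closure U * closure U) ∩ closure ⟨a⟩, covered by orbit translates of U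
  set D : Set G := (closure U * closure U) ∩ closure ((Subgroup.zpowers a : Subgroup G) : Set G)
    with hDdef
  have hDc : IsCompact D := (hUclc.mul hUclc).inter_right isClosed_closure
  have hcover : D ⊆ ⋃ j : ℤ, (fun g => a ^ j * g) '' U := by
    rintro h ⟨-, hH'⟩
    have h1 : h ∈ (fun g => h * g) '' U := ⟨1, hU1, mul_one h⟩
    obtain ⟨z, hzo, hzS⟩ :=
      (mem_closure_iff.mp hH') _ ((isOpenMap_mul_left h) U hUopen) h1
    obtain ⟨v, hv, hzv⟩ := hzo
    obtain ⟨m, hm⟩ := hzS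
    refine Set.mem_iUnion.mpr ⟨m, v⁻¹, hUsymm v hv, ?_⟩
    show a ^ m * v⁻¹ = h
    rw [show a ^ m = z from hm, ← show h * v = z from hzv]
    exact mul_inv_cancel_right h v
  obtain ⟨Jf, hJf⟩ := hDc.elim_finite_subcover _
    (fun j : ℤ => (isOpenMap_mul_left (a ^ j)) U hUopen) hcover
  set B : ℕ := Jf.sup Int.natAbs with hBdef
  -- the return set S
  set S : Set ℤ := {m : ℤ | a ^ m ∈ U} with hSdef
  have hSstep : ∀ s ∈ S, ∀ t ∈ S, ∃ j : ℤ, j.natAbs ≤ B ∧ s + t - j ∈ S := by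
    intro s hs t ht
    have hmem : a ^ (s + t) ∈ D := by
      refine ⟨?_, hpowH _⟩
      rw [zpow_add]
      exact Set.mul_mem_mul (subset_closure hs) (subset_closure ht)
    obtain ⟨j, hjJ, v, hv, hveq⟩ := Set.mem_iUnion₂.mp (hJf hmem)
    refine ⟨j, Finset.le_sup hjJ, ?_⟩
    show a ^ (s + t - j) ∈ U
    have he : s + t - j = -j + (s + t) := by ring
    rw [he, zpow_add, zpow_neg, ← hveq, inv_mul_cancel_left]
    exact hv
  -- neighborhoods adapted to conjugation, for the pigeonhole argument
  have hVx : ∀ x : G, ∃ V : Set G, IsOpen V ∧ (1 : G) ∈ V ∧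
      ∀ v ∈ V, ∀ w ∈ V, (x * v) * (x * w)⁻¹ ∈ U := by
    intro x
    have hcont : ContinuousAt (fun p : G × G => (x * p.1) * (x * p.2)⁻¹) (1, 1) := by fun_prop
    have hval : (x * (1 : G)) * (x * (1 : G))⁻¹ = 1 := by simp
    have hpre : (fun p : G × G => (x * p.1) * (x * p.2)⁻¹) ⁻¹' U ∈ nhds ((1 : G), (1 : G)) := by
      refine hcont.preimage_mem_nhds ?_
      simpa using hUopen.mem_nhds hU1
    rw [nhds_prod_eq] at hpre
    obtain ⟨V₁, hV₁, V₂, hV₂, hsub⟩ := Filter.mem_prod_iff.mp hpre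
    obtain ⟨W₁, hW₁s, hW₁o, hW₁1⟩ := mem_nhds_iff.mp hV₁
    obtain ⟨W₂, hW₂s, hW₂o, hW₂1⟩ := mem_nhds_iff.mp hV₂
    refine ⟨W₁ ∩ W₂, hW₁o.inter hW₂o, ⟨hW₁1, hW₂1⟩, ?_⟩
    intro v hv w hw
    exact hsub (Set.mk_mem_prod (hW₁s hv.1) (hW₂s hw.2))
  choose V hVo hV1 hVkey using hVx
  set L' : Set G := L ∩ closure ((Subgroup.zpowers a : Subgroup G) : Set G) with hL'def
  have hL'c : IsCompact L' := hL.inter_right isClosed_closure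
  have hcov2 : L' ⊆ ⋃ x : L', (fun g => (x : G) * g) '' V x := fun g hg =>
    Set.mem_iUnion.mpr ⟨⟨g, hg⟩, 1, hV1 g, mul_one g⟩
  obtain ⟨T, hT⟩ := hL'c.elim_finite_subcover _
    (fun x : L' => (isOpenMap_mul_left _) _ (hVo _)) hcov2
  have hretL' : ∀ M : ℕ, ∃ n : ℕ, M < n ∧ a ^ n ∈ L' := by
    intro M
    obtain ⟨n, hn, hnL⟩ := hrec M
    refine ⟨n, hn, hnL, ?_⟩
    have := hpowH (n : ℤ)
    rwa [zpow_natCast] at this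
  have hcell : ∃ x ∈ T, ∀ M : ℕ, ∃ n : ℕ, M < n ∧ a ^ n ∈ (fun g => (x : G) * g) '' V x := by
    by_contra hno
    push_neg at hno
    choose Mx hMx using hno
    obtain ⟨n, hn, hnL'⟩ := hretL' (T.attach.sup fun x => Mx x.1 x.2)
    obtain ⟨x, hxT, hxmem⟩ := Set.mem_iUnion₂.mp (hT hnL')
    exact hMx x hxT n (lt_of_le_of_lt (Finset.le_sup (f := fun x => Mx x.1 x.2) (Finset.mem_attach T ⟨x, hxT⟩)) hn) hxmem
  obtain ⟨x, hxT, hx⟩ := hcell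
  obtain ⟨n₀, -, hn₀⟩ := hx 0
  obtain ⟨n₁, hn₁, hn₁m⟩ := hx (n₀ + B)
  obtain ⟨w, hw, hweq⟩ := hn₀
  obtain ⟨v, hv, hveq⟩ := hn₁m
  set u : ℕ := n₁ - n₀ with hudef
  have huB : B < u := by omega
  have hau : a ^ u = a ^ n₁ * (a ^ n₀)⁻¹ := by
    have h2 : a ^ u * a ^ n₀ = a ^ n₁ := by rw [← pow_add]; congr 1; omega
    rw [← h2, mul_inv_cancel_right]
  have huU : a ^ u ∈ U := by
    rw [hau, ← hveq, ← hweq]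
    exact hVkey (x : G) v hv w hw
  have huS : (u : ℤ) ∈ S := by
    show a ^ (u : ℤ) ∈ U
    rwa [zpow_natCast]
  have huB' : (B : ℤ) < (u : ℤ) := by exact_mod_cast huB
  -- the syndetic chain
  have hkey : ∀ p : {s : ℤ // s ∈ S}, ∃ q : {s : ℤ // s ∈ S},
      p.1 + (u : ℤ) - (B : ℤ) ≤ q.1 ∧ q.1 ≤ p.1 + (u : ℤ) + (B : ℤ) := by
    rintro ⟨s, hs⟩
    obtain ⟨j, hjB, hjS⟩ := hSstep s hs (u : ℤ) huS
    have h1 : |j| ≤ (B : ℤ) := by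
      rw [Int.abs_eq_natAbs]; exact_mod_cast hjB
    obtain ⟨hj1, hj2⟩ := abs_le.mp h1
    exact ⟨⟨s + (u : ℤ) - j, hjS⟩, by simp only []; omega, by simp only []; omega⟩
  choose F hF1 hF2 using hkey
  set σ : ℕ → {s : ℤ // s ∈ S} := fun k => F^[k] ⟨(u : ℤ), huS⟩ with hσ
  have hσ0 : (σ 0).1 = (u : ℤ) := rfl
  have hσs : ∀ k, σ (k + 1) = F (σ k) := fun k => Function.iterate_succ_apply' F k _
  have hgrow : ∀ k : ℕ, (u : ℤ) + k ≤ (σ k).1 := by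
    intro k
    induction k with
    | zero => simp [hσ0]
    | succ k ih =>
      have h1 := hF1 (σ k)
      have h2 : (σ (k + 1)).1 = (F (σ k)).1 := by rw [hσs]
      push_cast
      push_cast at ih
      omega
  have hstepup : ∀ k, (σ (k + 1)).1 ≤ (σ k).1 + (u : ℤ) + (B : ℤ) := by
    intro k
    have h2 : (σ (k + 1)).1 = (F (σ k)).1 := by rw [hσs]
    rw [h2]
    exact hF2 (σ k)
  -- syndeticity on the positive side
  have hcover2 : ∀ y : ℤ, (u : ℤ) ≤ y → ∃ s ∈ S, y ≤ s ∧ s ≤ y + (u : ℤ) + (B : ℤ) := by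
    intro y hy
    have hex : ∃ k : ℕ, y ≤ (σ k).1 := by
      refine ⟨(y - (u : ℤ)).toNat, ?_⟩
      have hg := hgrow (y - (u : ℤ)).toNat
      have h2 : (((y - (u : ℤ)).toNat : ℕ) : ℤ) = y - (u : ℤ) := Int.toNat_of_nonneg (by omega)
      omega
    cases hfind : Nat.find hex with
    | zero =>
      have hk := Nat.find_spec hex
      rw [hfind] at hk
      refine ⟨(σ 0).1, (σ 0).2, hk, ?_⟩
      rw [hσ0]
      omega
    | succ k' =>
      have hk := Nat.find_spec hex
      rw [hfind] at hk
      have hk' : ¬ y ≤ (σ k').1 := Nat.find_min hex (by omega)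
      have hup := hstepup k'
      exact ⟨(σ (k' + 1)).1, (σ (k' + 1)).2, hk, by omega⟩
  -- the compact set containing the orbit
  set Ffin : Set G := (fun r : ℤ => a ^ r) '' Set.Icc (-((u : ℤ) + (B : ℤ))) ((u : ℤ) + (B : ℤ))
    with hFfin
  have hFfinc : IsCompact Ffin := ((Set.finite_Icc _ _).image _).isCompact
  have hTc : IsCompact (closure U * Ffin ∪ Ffin) := (hUclc.mul hFfinc).union hFfinc
  have horb : ((Subgroup.zpowers a : Subgroup G) : Set G) ⊆ closure U * Ffin ∪ Ffin := by
    intro g hg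
    obtain ⟨m, hm⟩ := hg
    have hm' : a ^ m = g := hm
    subst hm'
    rcases le_or_gt (u : ℤ) m with h1 | h1
    · obtain ⟨s, hsS, hs1, hs2⟩ := hcover2 m h1
      have he : a ^ m = a ^ s * a ^ (m - s) := by rw [← zpow_add]; congr 1; ring
      rw [he]
      exact Or.inl (Set.mul_mem_mul (subset_closure hsS) ⟨m - s, ⟨by omega, by omega⟩, rfl⟩)
    · rcases le_or_gt m (-(u : ℤ)) with h2 | h2
      · obtain ⟨s, hsS, hs1, hs2⟩ := hcover2 (-m) (by omega)
        have hnegS : a ^ (-s) ∈ U := by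
          rw [zpow_neg]
          exact hUsymm _ hsS
        have he : a ^ m = a ^ (-s) * a ^ (s + m) := by rw [← zpow_add]; congr 1; ring
        rw [he]
        exact Or.inl (Set.mul_mem_mul (subset_closure hnegS) ⟨s + m, ⟨by omega, by omega⟩, rfl⟩)
      · exact Or.inr ⟨m, ⟨by omega, by omega⟩, rfl⟩
  exact hTc.of_isClosed_subset isClosed_closure (closure_minimal horb hTc.isClosed)

/-- In a second countable locally compact (Hausdorff) group, `a` is aperiodic
(the closed subgroup generated by `a` is not compact) iff for every compact `K`
there is `M` with `K ∩ K a^{±n} = ∅` for all `n > M`. -/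
theorem aperiodic_iff_compact_separation {G : Type*} [Group G] [TopologicalSpace G]
    [IsTopologicalGroup G] [T2Space G] [LocallyCompactSpace G] [SecondCountableTopology G]
    (a : G) :
    (¬ IsCompact (closure ((Subgroup.zpowers a : Subgroup G) : Set G))) ↔
      ∀ K : Set G, IsCompact K → ∃ M : ℕ, ∀ n : ℕ, M < n →
        K ∩ (fun k => k * a ^ n) '' K = ∅ ∧ K ∩ (fun k => k * (a ^ n)⁻¹) '' K = ∅ := by
  constructor
  · intro hnc K hK
    by_contra hcon
    have hrec : ∀ M : ℕ, ∃ n : ℕ, M < n ∧ a ^ n ∈ (K⁻¹ * K) ∪ (K⁻¹ * K)⁻¹ := by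
      intro M
      by_contra hM
      push_neg at hM
      refine hcon ⟨M, fun n hn => ⟨?_, ?_⟩⟩
      · rw [Set.eq_empty_iff_forall_notMem]
        rintro g ⟨hgK, k, hkK, rfl⟩
        refine hM n hn (Or.inl ?_)
        have := Set.mul_mem_mul (Set.inv_mem_inv.mpr hkK) hgK
        simpa [inv_mul_cancel_left] using this
      · rw [Set.eq_empty_iff_forall_notMem]
        rintro g ⟨hgK, k, hkK, rfl⟩
        refine hM n hn (Or.inr ?_)
        rw [Set.mem_inv]
        have := Set.mul_mem_mul (Set.inv_mem_inv.mpr hkK) hgK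
        simpa [inv_mul_cancel_left] using this
    have hLc : IsCompact ((K⁻¹ * K) ∪ (K⁻¹ * K)⁻¹) :=
      (hK.inv.mul hK).union (hK.inv.mul hK).inv
    exact hnc (weil_compact_closure a _ hLc hrec)
  · intro h hcpt
    obtain ⟨M, hM⟩ := h _ hcpt
    have h1 := (hM (M + 1) (Nat.lt_succ_self M)).1
    have hmem : a ^ (M + 1) ∈ closure ((Subgroup.zpowers a : Subgroup G) : Set G) ∩
        (fun k => k * a ^ (M + 1)) '' closure ((Subgroup.zpowers a : Subgroup G) : Set G) := by
      constructor
      · exact subset_closure ⟨((M + 1 : ℕ) : ℤ), zpow_natCast a (M + 1)⟩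
      · exact ⟨1, subset_closure ⟨(0 : ℤ), by simp⟩, one_mul _⟩
    rw [h1] at hmem
    exact absurd hmem (Set.notMem_empty _)
end

section
/- Let X be a separable Banach space and T a bounded linear operator on X satisfying the blow-up/collapse property: for every pair of nonempty open sets U, V ⊆ X and every open neighborhood W of 0, there exists n ∈ ℕ with T^n(U) ∩ W ≠ ∅ and T^n(W) ∩ V ≠ ∅. Then T is topologically transitive (equivalently, hypercyclic). -/
/-- On a separable Banach space, a bounded linear operator with the
blow-up/collapse property is topologically transitive. -/
theorem transitive_of_blowup_collapse {X : Type*} [NormedAddCommGroup X]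
    [NormedSpace ℝ X] [CompleteSpace X] [TopologicalSpace.SeparableSpace X]
    (T : X →L[ℝ] X)
    (hbc : ∀ U V W : Set X, IsOpen U → IsOpen V → IsOpen W →
      U.Nonempty → V.Nonempty → (0 : X) ∈ W →
      ∃ n : ℕ, ((⇑(T ^ n)) '' U ∩ W).Nonempty ∧ ((⇑(T ^ n)) '' W ∩ V).Nonempty) :
    ∀ U V : Set X, IsOpen U → IsOpen V → U.Nonempty → V.Nonempty →
      ∃ n : ℕ, ((⇑(T ^ n)) '' U ∩ V).Nonempty := by
  intro U V hU hV ⟨u₀, hu₀⟩ ⟨v₀, hv₀⟩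
  obtain ⟨εu, hεu, hUb⟩ := Metric.isOpen_iff.1 hU u₀ hu₀
  obtain ⟨εv, hεv, hVb⟩ := Metric.isOpen_iff.1 hV v₀ hv₀
  set ε := min εu εv with hε
  have hεpos : 0 < ε := lt_min hεu hεv
  obtain ⟨n, ⟨y, ⟨u', hu', hy⟩, hyW⟩, ⟨z, ⟨w, hw, hz⟩, hzV⟩⟩ :=
    hbc (Metric.ball u₀ (ε / 2)) (Metric.ball v₀ (ε / 2)) (Metric.ball 0 (ε / 2))
      Metric.isOpen_ball Metric.isOpen_ball Metric.isOpen_ball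
      ⟨u₀, Metric.mem_ball_self (by linarith)⟩ ⟨v₀, Metric.mem_ball_self (by linarith)⟩
      (Metric.mem_ball_self (by linarith))
  refine ⟨n, (T ^ n) (u' + w), ⟨u' + w, ?_, rfl⟩, ?_⟩
  · apply hUb
    have h1 : dist u' u₀ < ε / 2 := hu'
    have h2 : ‖w‖ < ε / 2 := by simpa [dist_eq_norm] using hw
    have : dist (u' + w) u₀ ≤ dist u' u₀ + ‖w‖ := by
      simpa [dist_eq_norm, add_sub_right_comm] using norm_add_le (u' - u₀) w
    have : dist (u' + w) u₀ < ε := by linarith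
    exact Metric.mem_ball.2 (lt_of_lt_of_le this (min_le_left _ _))
  · apply hVb
    rw [map_add]
    subst hy
    have h1 : ‖(T ^ n) u'‖ < ε / 2 := by simpa using hyW
    have h2 : dist ((T ^ n) w) v₀ < ε / 2 := by rw [hz]; exact hzV
    have : dist ((T ^ n) u' + (T ^ n) w) v₀ ≤ ‖(T ^ n) u'‖ + dist ((T ^ n) w) v₀ := by
      simpa [dist_eq_norm, add_sub_assoc] using norm_add_le ((T ^ n) u') ((T ^ n) w - v₀)
    have : dist ((T ^ n) u' + (T ^ n) w) v₀ < ε := by linarith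
    exact Metric.mem_ball.2 (lt_of_lt_of_le this (min_le_right _ _))
end
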